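/- Let k ≥ 1 and n ≥ 3 be integers. Then the number of digitally convex sets of the k-th power of the cycle on n vertices equals the number of cyclic binary strings of length n all of whose blocks have length at least k+1; i.e., n_D(C_n^k) = |B_{k+1,n}|. -/

import Mathlib

open SimpleGraph

/-- `N[S]`: the union of closed neighbourhoods of the vertices of `S`. -/
def closedNbhd {V : Type*} (G : SimpleGraph V) (S : Set V) : Set V :=
  ⋃ v ∈ S, insert v (G.neighborSet v)

/-- A set `S` is digitally convex in `G` if every vertex `v` with `N[v] ⊆ N[S]`
belongs to `S`. -/
def DigConvex {V : Type*} (G : SimpleGraph V) (S : Set V) : Prop :=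
  ∀ v : V, insert v (G.neighborSet v) ⊆ closedNbhd G S → v ∈ S

/-- `n_D(G)`: the number of digitally convex sets of `G`. -/
noncomputable def nD {V : Type*} (G : SimpleGraph V) : ℕ :=
  Nat.card {S : Set V // DigConvex G S}

/-- A cyclic binary string `s : ZMod n → {0,1}` has all (maximal cyclic) blocks of
length at least `k`: whenever `s i ≠ s (i+1)`, the `k` bits starting at `i+1` all
equal `s (i+1)`. -/
def BlocksAtLeast {n : ℕ} (k : ℕ) (s : ZMod n → Fin 2) : Prop :=
  ∀ i : ZMod n, s i ≠ s (i + 1) → ∀ t : ℕ, 1 ≤ t → t ≤ k → s (i + (t : ZMod n)) = s (i + 1)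

/-- `a k n = |B_{k,n}|`: the number of cyclic binary strings of length `n` all of
whose blocks have length at least `k`. -/
noncomputable def numCyclicStrings (k n : ℕ) : ℕ :=
  Nat.card {s : ZMod n → Fin 2 // BlocksAtLeast k s}

/-- The `k`-th power `C_n^k` of the cycle `C_n`: distinct vertices `i j : ZMod n`
are adjacent iff `j - i ∈ {±1, ±2, …, ±k}`. -/
def cyclePow (n k : ℕ) : SimpleGraph (ZMod n) :=
  SimpleGraph.fromRel (fun i j => ∃ t : ℕ, 1 ≤ t ∧ t ≤ k ∧ j = i + (t : ZMod n))

/-! Let `D S = S - {0, …, k}` and let `E T = {j | j - {0, …, k} ⊆ T}` be its upper adjoint. In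
`C_n^k` the closed neighbourhood `N[S]` is the translate by `k` of `D (D S)`, so the inclusions
`N[v] ⊆ N[S]` in the definition of digital convexity can be tested on `D`. Call `T` window-open if
each of its points lies in `k + 1` consecutive points of `T`, i.e. `D (E T) = T`. Then `S ↦ D S`
is a bijection from the digitally convex sets onto the sets `T` with `T` and `Tᶜ` window-open,
inverse to `E`, and such `T` are exactly the supports of the strings in `B_{k+1,n}`. -/

section Window

variable {R : Type*} [CommRing R]

def dilate (k : ℕ) (S : Set R) : Set R := {i | ∃ t ≤ k, i + t ∈ S}

def erode (k : ℕ) (T : Set R) : Set R := {j | ∀ t ≤ k, j - t ∈ T}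

def IsWindowOpen (k : ℕ) (T : Set R) : Prop := T ⊆ dilate k (erode k T)

theorem gc_dilate_erode (k : ℕ) : GaloisConnection (dilate k : Set R → Set R) (erode k) := by
  intro S T
  constructor
  · intro h j hj t ht
    exact h ⟨t, ht, by simpa using hj⟩
  · rintro h i ⟨t, ht, hi⟩
    simpa using h hi t ht

theorem dilate_add (a b : ℕ) (S : Set R) : dilate (a + b) S = dilate a (dilate b S) := by
  ext x
  constructor
  · rintro ⟨t, ht, h⟩
    by_cases hta : t ≤ a
    · exact ⟨t, hta, 0, Nat.zero_le _, by simpa using h⟩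
    · refine ⟨a, le_rfl, t - a, by omega, ?_⟩
      convert h using 1
      push_cast [Nat.cast_sub (show a ≤ t by omega)]
      ring
  · rintro ⟨t₁, ht₁, t₂, ht₂, h⟩
    exact ⟨t₁ + t₂, by omega, by simpa [add_assoc] using h⟩

theorem isWindowOpen_dilate (k : ℕ) (S : Set R) : IsWindowOpen k (dilate k S) :=
  ((gc_dilate_erode k).l_u_l_eq_l S).ge

theorem IsWindowOpen.dilate_erode_eq {k : ℕ} {T : Set R} (hT : IsWindowOpen k T) :
    dilate k (erode k T) = T :=
  ((gc_dilate_erode k).l_u_le T).antisymm hT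

theorem IsWindowOpen.erode_dilate_compl_subset {k : ℕ} {T : Set R} (hT : IsWindowOpen k Tᶜ) :
    erode k (dilate k T) ⊆ T := by
  intro x hx
  by_contra hxT
  obtain ⟨t, ht, hy⟩ := hT hxT
  obtain ⟨q, hq, hmem⟩ := hx (k - t) (by omega)
  apply hy (k - q) (by omega)
  convert hmem using 1
  push_cast [Nat.cast_sub ht, Nat.cast_sub hq]
  ring

end Window

open Classical in
noncomputable def subtypeSetEquivFinTwo {α : Type*} (P : Set α → Prop) :
    {T : Set α // P T ∧ P Tᶜ} ≃ {s : α → Fin 2 // ∀ c, P (s ⁻¹' {c})} where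
  toFun T := ⟨fun i => if i ∈ T.1 then 1 else 0, fun c => by
    fin_cases c
    · convert T.2.2 using 1
      ext
      simp
    · convert T.2.1 using 1
      ext
      simp⟩
  invFun s := ⟨s.1 ⁻¹' {1}, s.2 1, by
    convert s.2 0 using 1
    ext i
    simp only [Set.mem_compl_iff, Set.mem_preimage, Set.mem_singleton_iff]
    omega⟩
  left_inv T := by ext; simp
  right_inv s := by
    ext i
    simp only [Set.mem_preimage, Set.mem_singleton_iff]
    split_ifs <;> omega

section Cycle

variable {n k : ℕ}

theorem BlocksAtLeast.exists_window {s : ZMod n → Fin 2} (hs : BlocksAtLeast (k + 1) s)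
    (i : ZMod n) : ∃ t ≤ k, ∀ r ≤ k, s (i + t - r) = s i := by
  by_cases h : ∀ r ≤ k, s (i - r) = s i
  · exact ⟨0, Nat.zero_le _, by simpa using h⟩
  push Not at h
  classical
  -- `i - j` is the nearest point before `i` of the other colour
  obtain ⟨hjk, hj⟩ := Nat.find_spec h
  set j := Nat.find h
  have hj0 : 1 ≤ j := Nat.one_le_iff_ne_zero.2 fun h0 => by rw [h0] at hj; simp at hj
  have hprev : s (i - (j - 1 : ℕ)) = s i := by
    by_contra hne
    exact Nat.find_min h (by omega : j - 1 < j) ⟨by omega, hne⟩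
  have hstep : i - j + 1 = i - (j - 1 : ℕ) := by
    push_cast [Nat.cast_sub hj0]
    ring
  have hchange : s (i - j) ≠ s (i - j + 1) := by rw [hstep, hprev]; exact hj
  refine ⟨k + 1 - j, by omega, fun r hr => ?_⟩
  have hrun := hs (i - j) hchange (k + 1 - r) (by omega) (by omega)
  rw [hstep, hprev] at hrun
  convert hrun using 2
  push_cast [Nat.cast_sub (show r ≤ k + 1 by omega), Nat.cast_sub (show j ≤ k + 1 by omega)]
  ring

theorem blocksAtLeast_succ_of_forall_exists_window {s : ZMod n → Fin 2}
    (hw : ∀ i, ∃ t ≤ k, ∀ r ≤ k, s (i + t - r) = s i) : BlocksAtLeast (k + 1) s := by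
  intro i hne t ht₁ htk
  obtain ⟨t₀, ht₀, hw⟩ := hw (i + 1)
  have ht₀k : t₀ = k := by
    by_contra hlt
    apply hne
    convert hw (t₀ + 1) (by omega) using 2
    push_cast
    ring
  subst ht₀k
  convert hw (t₀ + 1 - t) (by omega) using 2
  push_cast [Nat.cast_sub htk]
  ring

theorem blocksAtLeast_succ_iff {s : ZMod n → Fin 2} :
    BlocksAtLeast (k + 1) s ↔ ∀ c, IsWindowOpen k (s ⁻¹' {c}) :=
  ⟨fun hs c i (hi : s i = c) => hi ▸ hs.exists_window i,
    fun h => blocksAtLeast_succ_of_forall_exists_window fun i => h (s i) rfl⟩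

theorem mem_insert_neighborSet_cyclePow {u v : ZMod n} :
    u ∈ insert v ((cyclePow n k).neighborSet v) ↔ ∃ t ≤ k, u = v + t ∨ v = u + t := by
  rw [Set.mem_insert_iff, SimpleGraph.mem_neighborSet, cyclePow, SimpleGraph.fromRel_adj]
  constructor
  · rintro (rfl | ⟨-, ⟨t, -, ht, h⟩ | ⟨t, -, ht, h⟩⟩)
    · exact ⟨0, Nat.zero_le _, by simp⟩
    · exact ⟨t, ht, .inl h⟩
    · exact ⟨t, ht, .inr h⟩
  · rintro ⟨t, ht, h⟩
    by_cases huv : u = v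
    · exact .inl huv
    have ht0 : 1 ≤ t :=
      Nat.one_le_iff_ne_zero.2 fun ht0 => huv (by subst ht0; simpa [eq_comm] using h)
    exact .inr ⟨Ne.symm huv, h.imp (fun h => ⟨t, ht0, ht, h⟩) fun h => ⟨t, ht0, ht, h⟩⟩

theorem mem_closedNbhd_cyclePow {S : Set (ZMod n)} {x : ZMod n} :
    x ∈ closedNbhd (cyclePow n k) S ↔ x - k ∈ dilate (k + k) S := by
  simp only [closedNbhd, Set.mem_iUnion, exists_prop, mem_insert_neighborSet_cyclePow]
  constructor
  · rintro ⟨v, hv, t, ht, rfl | rfl⟩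
    · refine ⟨k - t, by omega, ?_⟩
      convert hv using 1
      push_cast [Nat.cast_sub ht]
      ring
    · refine ⟨k + t, by omega, ?_⟩
      convert hv using 1
      push_cast
      ring
  · rintro ⟨t, ht, hmem⟩
    refine ⟨_, hmem, ?_⟩
    by_cases htk : t ≤ k
    · refine ⟨k - t, by omega, .inl ?_⟩
      push_cast [Nat.cast_sub htk]
      ring
    · refine ⟨t - k, by omega, .inr ?_⟩
      push_cast [Nat.cast_sub (show k ≤ t by omega)]
      ring

theorem digConvex_cyclePow_iff {S : Set (ZMod n)} :
    DigConvex (cyclePow n k) S ↔ ∀ v, dilate (k + k) {v} ⊆ dilate (k + k) S → v ∈ S := by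
  have hN : ∀ T : Set (ZMod n),
      closedNbhd (cyclePow n k) T = (Equiv.subRight (k : ZMod n)) ⁻¹' dilate (k + k) T :=
    fun T => Set.ext fun _ => mem_closedNbhd_cyclePow
  have hv : ∀ v, insert v ((cyclePow n k).neighborSet v) = closedNbhd (cyclePow n k) {v} := by
    simp [closedNbhd]
  simp only [DigConvex, hv, hN, (Equiv.subRight _).surjective.preimage_subset_preimage_iff]

theorem erode_dilate_of_digConvex {S : Set (ZMod n)} (hS : DigConvex (cyclePow n k) S) :
    erode k (dilate k S) = S := by
  refine Set.Subset.antisymm (fun j hj => ?_) ((gc_dilate_erode k).le_u_l S)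
  have hj' : dilate k {j} ⊆ dilate k S := (gc_dilate_erode k).l_le (Set.singleton_subset_iff.2 hj)
  refine digConvex_cyclePow_iff.1 hS j ?_
  rw [dilate_add, dilate_add]
  exact (gc_dilate_erode k).monotone_l hj'

theorem isWindowOpen_compl_dilate_of_digConvex {S : Set (ZMod n)}
    (hS : DigConvex (cyclePow n k) S) : IsWindowOpen k (dilate k S)ᶜ := by
  intro i hi
  suffices ∃ a : ZMod n, ∃ t ≤ k, i = a + t ∧ ∀ m ≤ k + k, a + m ∉ S by
    obtain ⟨a, t, ht, rfl, ha⟩ := this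
    refine ⟨k - t, by omega, fun r hr ⟨q, hq, hmem⟩ => ha (k - r + q) (by omega) ?_⟩
    convert hmem using 1
    push_cast [Nat.cast_sub ht, Nat.cast_sub hr]
    ring
  have hi' : ∀ m ≤ k, i + m ∉ S := fun m hm h => hi ⟨m, hm, h⟩
  -- convexity at `i + k ∉ S` yields a vertex `w + k` near `i + k` whose neighbourhood misses `S`
  obtain ⟨w, ⟨e, he, hwe⟩, hw⟩ :=
    Set.not_subset.1 (mt (digConvex_cyclePow_iff.1 hS (i + k)) (hi' k le_rfl))
  rw [Set.mem_singleton_iff] at hwe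
  have hw' : ∀ m ≤ k + k, w + m ∉ S := fun m hm h => hw ⟨m, hm, h⟩
  by_cases hek : k ≤ e
  · refine ⟨w, e - k, by omega, ?_, hw'⟩
    push_cast [Nat.cast_sub hek]
    linear_combination -hwe
  · refine ⟨i, 0, Nat.zero_le _, by simp, fun m hm => ?_⟩
    by_cases hmk : m ≤ k
    · exact hi' m hmk
    · convert hw' (m - k + e) (by omega) using 2
      push_cast [Nat.cast_sub (show k ≤ m by omega)]
      linear_combination -hwe

theorem digConvex_erode {T : Set (ZMod n)} (hT : IsWindowOpen k T) (hTc : IsWindowOpen k Tᶜ) :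
    DigConvex (cyclePow n k) (erode k T) := by
  refine digConvex_cyclePow_iff.2 fun v hv => ?_
  rw [dilate_add, dilate_add, hT.dilate_erode_eq] at hv
  have hvT : dilate k {v} ⊆ T := ((gc_dilate_erode k).le_u hv).trans hTc.erode_dilate_compl_subset
  exact Set.singleton_subset_iff.1 ((gc_dilate_erode k).le_u hvT)

def digConvexEquivWindowOpen (n k : ℕ) : {S // DigConvex (cyclePow n k) S} ≃
    {T : Set (ZMod n) // IsWindowOpen k T ∧ IsWindowOpen k Tᶜ} where
  toFun S := ⟨dilate k S, isWindowOpen_dilate k S.1, isWindowOpen_compl_dilate_of_digConvex S.2⟩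
  invFun T := ⟨erode k T, digConvex_erode T.2.1 T.2.2⟩
  left_inv S := Subtype.ext (erode_dilate_of_digConvex S.2)
  right_inv T := Subtype.ext T.2.1.dilate_erode_eq

end Cycle

theorem nD_cyclePow_eq_cyclic_strings (k n : ℕ) :
    nD (cyclePow n k) = numCyclicStrings (k + 1) n :=
  calc nD (cyclePow n k)
      = Nat.card {T : Set (ZMod n) // IsWindowOpen k T ∧ IsWindowOpen k Tᶜ} :=
        Nat.card_congr (digConvexEquivWindowOpen n k)
    _ = Nat.card {s : ZMod n → Fin 2 // ∀ c, IsWindowOpen k (s ⁻¹' {c})} :=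
        Nat.card_congr (subtypeSetEquivFinTwo _)
    _ = numCyclicStrings (k + 1) n :=
        Nat.card_congr (Equiv.subtypeEquivRight fun _ => blocksAtLeast_succ_iff.symm)
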